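/- arXiv:1201.0408 — 3 statements merged into one kernel-verified Lean document; each statement's English description precedes it below -/
import Mathlib

section
/- Let $n \geq 2$, $1 < p < 2$, let $\omega$ be a nondecreasing continuous function on $[0,\infty)$ with $\omega(0) = 0$ and $\omega(\delta) > 0$ for $\delta > 0$, and let $\chi^{-1}$ be the inverse of $\chi(\delta) = \delta\omega(\delta)$. Then $\int_1^\infty \lambda^{n-1-p} (\chi^{-1}(1/\lambda))^{(n-1)p} d\lambda < \infty$ if and only if $\int_0^1 \delta^{n(p-1)-1} / (\omega(\delta))^{n-p} \, d\delta < \infty$. -/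
/-!
By the layer-cake formula for the measure `λ^(n-1-p) dλ` on `[1, ∞)`, the left integral is
`(n-1)p ∫_0^∞ t^((n-1)p-1) |{λ ≥ 1 : t < ψ(1/λ)}| dt`. Since `ψ` inverts the strictly increasing
`χ(t) = t ω(t)`, that set is `[1, 1/χ(t))`, of measure `(χ(t)^(p-n) - 1)/(n-p)`, which vanishes for
`t ≥ ψ(1)`. Up to the integrable term `t^((n-1)p-1)/(n-p)`, the integrand is then
`t^(n(p-1)-1) ω(t)^(p-n)/(n-p)`, which is bounded away from `0`; so only its integrability near `0`
matters, and that is the right integral.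
-/

open MeasureTheory Real Set ENNReal
open scoped NNReal

theorem ENNReal.mul_lt_top_iff_of_ne_zero_of_ne_top {a b : ℝ≥0∞} (ha₀ : a ≠ 0) (ha : a ≠ ⊤) :
    a * b < ⊤ ↔ b < ⊤ :=
  ⟨fun h => ENNReal.lt_top_of_mul_ne_top_right h.ne ha₀, ENNReal.mul_lt_top ha.lt_top⟩

theorem setLIntegral_Ico_one_rpow {a M : ℝ} (ha : -1 < a) (hM : 0 ≤ M) :
    ∫⁻ l in Ico 1 M, ENNReal.ofReal (l ^ a) = ENNReal.ofReal ((M ^ (a + 1) - 1) / (a + 1)) := by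
  rcases le_or_gt 1 M with h1M | hM1
  · rw [Measure.restrict_congr_set Ico_ae_eq_Ioc, ← ofReal_integral_eq_lintegral_ofReal,
      ← intervalIntegral.integral_of_le h1M, integral_rpow (Or.inl ha), Real.one_rpow]
    · exact (intervalIntegral.intervalIntegrable_rpow' ha).1
    · filter_upwards [ae_restrict_mem measurableSet_Ioc] with l hl
      exact rpow_nonneg (by linarith [hl.1]) a
  · rw [Ico_eq_empty (by linarith), Measure.restrict_empty, lintegral_zero_measure, eq_comm,
      ENNReal.ofReal_eq_zero]
    exact div_nonpos_of_nonpos_of_nonneg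
      (by linarith [rpow_le_one hM hM1.le (by linarith : 0 ≤ a + 1)]) (by linarith)

theorem setLIntegral_lt_top_iff_of_add_eq_const_mul {α : Type*} [MeasurableSpace α]
    {μ : Measure α} {s : Set α} (hs : MeasurableSet s) {f g h : α → ℝ≥0∞} {c : ℝ≥0∞}
    (hg : AEMeasurable g (μ.restrict s)) (hg_fin : ∫⁻ x in s, g x ∂μ < ⊤) (hc₀ : c ≠ 0)
    (hc : c ≠ ⊤) (hfgh : ∀ x ∈ s, f x + g x = c * h x) :
    ∫⁻ x in s, f x ∂μ < ⊤ ↔ ∫⁻ x in s, h x ∂μ < ⊤ := by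
  have hsum : ∫⁻ x in s, f x ∂μ + ∫⁻ x in s, g x ∂μ = c * ∫⁻ x in s, h x ∂μ := by
    rw [← lintegral_add_right' _ hg, ← lintegral_const_mul' _ _ hc]
    exact setLIntegral_congr_fun hs hfgh
  calc ∫⁻ x in s, f x ∂μ < ⊤ ↔ ∫⁻ x in s, f x ∂μ + ∫⁻ x in s, g x ∂μ < ⊤ := by
        rw [ENNReal.add_lt_top, and_iff_left hg_fin]
    _ ↔ ∫⁻ x in s, h x ∂μ < ⊤ := by rw [hsum, mul_lt_top_iff_of_ne_zero_of_ne_top hc₀ hc]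

theorem setLIntegral_Ioc_lt_top_congr {f : ℝ → ℝ≥0∞} {a u v : ℝ} (hu : a < u) (hv : a < v)
    (hbdd : ∀ s, a < s → ∀ w, ∃ C : ℝ≥0, ∀ t ∈ Ioc s w, f t ≤ C) :
    ∫⁻ t in Ioc a u, f t < ⊤ ↔ ∫⁻ t in Ioc a v, f t < ⊤ := by
  wlog huv : u ≤ v generalizing u v
  · exact (this hv hu (le_of_not_ge huv)).symm
  rw [← Ioc_union_Ioc_eq_Ioc hu.le huv, lintegral_union measurableSet_Ioc
    (Ioc_disjoint_Ioc_of_le le_rfl), ENNReal.add_lt_top,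
    and_iff_left (setLIntegral_lt_top_of_le_nnreal (by simp) (hbdd u hu v))]

theorem setLIntegral_Ioi_eq_setLIntegral_Ioc {f : ℝ → ℝ≥0∞} {a u : ℝ} (hau : a ≤ u)
    (hf : ∀ t, u < t → f t = 0) : ∫⁻ t in Ioi a, f t = ∫⁻ t in Ioc a u, f t := by
  rw [← Ioc_union_Ioi_eq_Ioi hau, lintegral_union measurableSet_Ioi (Ioc_disjoint_Ioi le_rfl),
    setLIntegral_congr_fun measurableSet_Ioi hf, lintegral_zero, add_zero]

theorem ofReal_rpow_sub_one_div_mul_add_eq {t w c d e : ℝ} (ht : 0 < t) (hw : 0 < w)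
    (htw : t * w ≤ 1) (he : 0 < e) (hd : d = c + e) :
    ENNReal.ofReal (((1 / (t * w)) ^ e - 1) / e) * ENNReal.ofReal (t ^ d) +
        ENNReal.ofReal (1 / e) * ENNReal.ofReal (t ^ d) =
      ENNReal.ofReal (1 / e) * ENNReal.ofReal (t ^ c / w ^ e) := by
  have hX : 1 ≤ (1 / (t * w)) ^ e :=
    one_le_rpow ((one_le_div (mul_pos ht hw)).2 htw) he.le
  rw [← add_mul, ← ENNReal.ofReal_add (div_nonneg (by linarith) he.le) (by positivity),
    ← ENNReal.ofReal_mul (by positivity), ← ENNReal.ofReal_mul (by positivity)]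
  congr 1
  rw [hd, rpow_add ht, div_rpow zero_le_one (mul_pos ht hw).le, Real.one_rpow,
    mul_rpow ht.le hw.le]
  field_simp
  ring

section RightInverse

variable {χ ψ : ℝ → ℝ} (hχ : StrictMonoOn χ (Ioi 0)) (hψ : MapsTo ψ (Ioi 0) (Ioi 0))
  (hχψ : RightInvOn ψ χ (Ioi 0))
include hχ hψ hχψ

theorem StrictMonoOn.lt_rightInvOn_iff {t y : ℝ} (ht : 0 < t) (hy : 0 < y) :
    t < ψ y ↔ χ t < y := by
  rw [← hχ.lt_iff_lt ht (hψ hy), hχψ hy]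

theorem StrictMonoOn.monotoneOn_rightInvOn : MonotoneOn ψ (Ioi 0) := fun y hy y' hy' hyy' => by
  rw [← hχ.le_iff_le (hψ hy) (hψ hy'), hχψ hy, hχψ hy']
  exact hyy'

theorem setLIntegral_Ici_rpow_mul_rpow_rightInvOn (hχpos : ∀ t, 0 < t → 0 < χ t) {a b : ℝ}
    (ha : -1 < a) (hb : 0 < b) :
    ∫⁻ l in Ici 1, ENNReal.ofReal (l ^ a * ψ (1 / l) ^ b) =
      ENNReal.ofReal b * ∫⁻ t in Ioi 0,
        ENNReal.ofReal (((1 / χ t) ^ (a + 1) - 1) / (a + 1)) * ENNReal.ofReal (t ^ (b - 1)) := by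
  set μ := (volume.restrict (Ici (1 : ℝ))).withDensity fun l => ENNReal.ofReal (l ^ a)
  have hμ : μ ≪ volume.restrict (Ici 1) := withDensity_absolutelyContinuous _ _
  have hψ_anti : AntitoneOn (fun l => ψ (1 / l)) (Ici 1) := fun l hl l' _ hll' => by
    have hl₀ : 0 < l := zero_lt_one.trans_le hl
    exact hχ.monotoneOn_rightInvOn hψ hχψ (one_div_pos.2 (hl₀.trans_le hll')) (one_div_pos.2 hl₀)
      (one_div_le_one_div_of_le hl₀ hll')
  have hψ_meas := aemeasurable_restrict_of_antitoneOn (μ := volume) measurableSet_Ici hψ_anti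
  have hψ_nonneg : ∀ᵐ l ∂volume.restrict (Ici 1), 0 ≤ ψ (1 / l) := by
    filter_upwards [ae_restrict_mem measurableSet_Ici] with l hl
    exact (hψ (mem_Ioi.2 (one_div_pos.2 (zero_lt_one.trans_le hl)))).le
  have hsection : ∀ t, 0 < t → μ {l | t < ψ (1 / l)} =
      ENNReal.ofReal (((1 / χ t) ^ (a + 1) - 1) / (a + 1)) := by
    intro t ht
    have hset : {l | t < ψ (1 / l)} ∩ Ici 1 = Ico 1 (1 / χ t) := by
      ext l
      rw [mem_inter_iff, mem_Ico, and_comm]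
      refine and_congr_right fun hl => ?_
      have hl₀ : 0 < l := zero_lt_one.trans_le hl
      rw [mem_ofPred_eq, hχ.lt_rightInvOn_iff hψ hχψ ht (one_div_pos.2 hl₀),
        lt_one_div (hχpos t ht) hl₀]
    rw [withDensity_apply', Measure.restrict_restrict' measurableSet_Ici, hset,
      setLIntegral_Ico_one_rpow ha (one_div_pos.2 (hχpos t ht)).le]
  calc ∫⁻ l in Ici 1, ENNReal.ofReal (l ^ a * ψ (1 / l) ^ b)
      = ∫⁻ l, ENNReal.ofReal (ψ (1 / l) ^ b) ∂μ := by
        rw [lintegral_withDensity_eq_lintegral_mul₀ (by fun_prop)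
          (hψ_meas.pow_const b).ennreal_ofReal]
        refine setLIntegral_congr_fun measurableSet_Ici fun l hl => ?_
        exact ENNReal.ofReal_mul (rpow_nonneg (zero_le_one.trans hl) a)
    _ = ENNReal.ofReal b * ∫⁻ t in Ioi 0, μ {l | t < ψ (1 / l)} * ENNReal.ofReal (t ^ (b - 1)) :=
        lintegral_rpow_eq_lintegral_meas_lt_mul μ (hμ.ae_le hψ_nonneg) (hψ_meas.mono_ac hμ) hb
    _ = _ := by
        congr 1
        exact setLIntegral_congr_fun measurableSet_Ioi fun t ht => by rw [hsection t ht]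

end RightInverse

section Modulus

variable {ω : ℝ → ℝ} (hmono : MonotoneOn ω (Ioi 0)) (hpos : ∀ t, 0 < t → 0 < ω t)
include hmono hpos

theorem strictMonoOn_mul_self_of_monotoneOn : StrictMonoOn (fun t => t * ω t) (Ioi 0) :=
  fun s hs t ht hst => calc
    s * ω s < t * ω s := mul_lt_mul_of_pos_right hst (hpos s hs)
    _ ≤ t * ω t := mul_le_mul_of_nonneg_left (hmono hs ht hst.le) (le_of_lt ht)

theorem exists_ofReal_rpow_div_rpow_le (c : ℝ) {e : ℝ} (he : 0 ≤ e) {s : ℝ} (hs : 0 < s)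
    (w : ℝ) : ∃ C : ℝ≥0, ∀ t ∈ Ioc s w, ENNReal.ofReal (t ^ c / ω t ^ e) ≤ C := by
  refine ⟨(max (s ^ c) (w ^ c) / ω s ^ e).toNNReal, fun t ⟨hst, htw⟩ =>
    ENNReal.ofReal_le_ofReal ?_⟩
  have ht : 0 < t := hs.trans hst
  have hnum : t ^ c ≤ max (s ^ c) (w ^ c) := by
    rcases le_or_gt 0 c with hc | hc
    · exact le_max_of_le_right (rpow_le_rpow ht.le htw hc)
    · exact le_max_of_le_left (rpow_le_rpow_of_nonpos hs hst.le hc.le)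
  exact div_le_div₀ ((rpow_nonneg hs.le c).trans (le_max_left _ _)) hnum
    (rpow_pos_of_pos (hpos s hs) e) (rpow_le_rpow (hpos s hs).le (hmono hs ht hst.le) he)

theorem setLIntegral_Ioi_rpow_sub_one_mul_rpow_lt_top_iff {ψ : ℝ → ℝ}
    (hψ : MapsTo ψ (Ioi 0) (Ioi 0)) (hωψ : RightInvOn ψ (fun t => t * ω t) (Ioi 0))
    {c d e : ℝ} (he : 0 < e) (hd₀ : -1 < d) (hd : d = c + e) :
    ∫⁻ t in Ioi 0,
        ENNReal.ofReal (((1 / (t * ω t)) ^ e - 1) / e) * ENNReal.ofReal (t ^ d) < ⊤ ↔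
      ∫⁻ t in Ioc 0 1, ENNReal.ofReal (t ^ c / ω t ^ e) < ⊤ := by
  have hχ := strictMonoOn_mul_self_of_monotoneOn hmono hpos
  have hψ1 : 0 < ψ 1 := hψ (mem_Ioi.2 one_pos)
  have hvanish : ∀ t, ψ 1 < t →
      ENNReal.ofReal (((1 / (t * ω t)) ^ e - 1) / e) * ENNReal.ofReal (t ^ d) = 0 := by
    intro t htψ
    have ht : 0 < t := hψ1.trans htψ
    have h1 : 1 < t * ω t := by
      simpa only [hωψ (mem_Ioi.2 one_pos)] using (hχ.lt_iff_lt hψ1 ht).2 htψ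
    have hX : (1 / (t * ω t)) ^ e ≤ 1 :=
      rpow_le_one (by positivity) ((div_le_one (by positivity)).2 h1.le) he.le
    rw [ENNReal.ofReal_eq_zero.2 (div_nonpos_of_nonpos_of_nonneg (by linarith) he.le), zero_mul]
  have hχ_le : ∀ t ∈ Ioc 0 (ψ 1), t * ω t ≤ 1 := fun t ⟨ht, htψ⟩ => by
    simpa only [hωψ (mem_Ioi.2 one_pos)] using (hχ.le_iff_le ht hψ1).2 htψ
  have hfin : ∫⁻ t in Ioc 0 (ψ 1), ENNReal.ofReal (1 / e) * ENNReal.ofReal (t ^ d) < ⊤ := by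
    rw [lintegral_const_mul' _ _ ofReal_ne_top]
    exact ENNReal.mul_lt_top ofReal_lt_top
      (intervalIntegral.intervalIntegrable_rpow' hd₀).1.lintegral_lt_top
  rw [setLIntegral_Ioi_eq_setLIntegral_Ioc hψ1.le hvanish,
    setLIntegral_lt_top_iff_of_add_eq_const_mul measurableSet_Ioc (by fun_prop) hfin
      (ENNReal.ofReal_pos.2 (one_div_pos.2 he)).ne' ofReal_ne_top fun t ht =>
        ofReal_rpow_sub_one_div_mul_add_eq ht.1 (hpos t ht.1) (hχ_le t ht) he hd]
  exact setLIntegral_Ioc_lt_top_congr hψ1 one_pos fun s hs w =>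
    exists_ofReal_rpow_div_rpow_le hmono hpos c he.le hs w

end Modulus

theorem lemma2_integral_equivalence_general (n : ℕ) (hn : 2 ≤ n) (p : ℝ) (hp1 : 1 < p) (hp2 : p < 2)
    (ω ψ : ℝ → ℝ) (hmono : MonotoneOn ω (Set.Ici 0))
    (hωpos : ∀ δ : ℝ, 0 < δ → 0 < ω δ)
    (hψ₂ : ∀ y : ℝ, 0 ≤ y → 0 ≤ ψ y ∧ ψ y * ω (ψ y) = y) :
    (∫⁻ l in Set.Ici (1:ℝ),
        ENNReal.ofReal (l ^ ((n:ℝ) - 1 - p) * ψ (1/l) ^ (((n:ℝ) - 1) * p))) < ⊤ ↔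
      (∫⁻ δ in Set.Ioc (0:ℝ) 1,
        ENNReal.ofReal (δ ^ ((n:ℝ) * (p - 1) - 1) / ω δ ^ ((n:ℝ) - p))) < ⊤ := by
  have hn' : (2 : ℝ) ≤ n := by exact_mod_cast hn
  have hmono' := hmono.mono Ioi_subset_Ici_self
  have hωψ : RightInvOn ψ (fun t => t * ω t) (Ioi 0) := fun y hy => (hψ₂ y hy.le).2
  have hψ : MapsTo ψ (Ioi 0) (Ioi 0) := fun y (hy : 0 < y) => by
    obtain ⟨hψy₀, hψy⟩ := hψ₂ y hy.le
    refine hψy₀.lt_of_ne fun h => hy.ne ?_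
    rwa [← h, zero_mul] at hψy
  rw [setLIntegral_Ici_rpow_mul_rpow_rightInvOn (strictMonoOn_mul_self_of_monotoneOn hmono' hωpos)
      hψ hωψ (fun t ht => mul_pos ht (hωpos t ht)) (by linarith) (by nlinarith),
    mul_lt_top_iff_of_ne_zero_of_ne_top (ENNReal.ofReal_pos.2 (by nlinarith)).ne'
      ofReal_ne_top,
    show (n : ℝ) - 1 - p + 1 = n - p by ring]
  exact setLIntegral_Ioi_rpow_sub_one_mul_rpow_lt_top_iff hmono' hωpos hψ hωψ (by linarith)
    (by nlinarith) (by ring)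

/-- Lemma 2: for `n ≥ 2`, `1 < p < 2`, a modulus of continuity `ω` and the
inverse `ψ = χ⁻¹` of `χ(δ) = δω(δ)`, the convergence of
`∫_1^∞ λ^{n-1-p} (χ⁻¹(1/λ))^{(n-1)p} dλ` is equivalent to that of
`∫_0^1 δ^{n(p-1)-1}/ω(δ)^{n-p} dδ`. -/
theorem lemma2_integral_equivalence (n : ℕ) (hn : 2 ≤ n) (p : ℝ) (hp1 : 1 < p) (hp2 : p < 2)
    (ω ψ : ℝ → ℝ) (hmono : MonotoneOn ω (Set.Ici 0)) (hcont : ContinuousOn ω (Set.Ici 0))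
    (hω0 : ω 0 = 0) (hωpos : ∀ δ : ℝ, 0 < δ → 0 < ω δ)
    (hψ₁ : ∀ δ : ℝ, 0 ≤ δ → ψ (δ * ω δ) = δ)
    (hψ₂ : ∀ y : ℝ, 0 ≤ y → 0 ≤ ψ y ∧ ψ y * ω (ψ y) = y) :
    (∫⁻ l in Set.Ici (1:ℝ),
        ENNReal.ofReal (l ^ ((n:ℝ) - 1 - p) * ψ (1/l) ^ (((n:ℝ) - 1) * p))) < ⊤ ↔
      (∫⁻ δ in Set.Ioc (0:ℝ) 1,
        ENNReal.ofReal (δ ^ ((n:ℝ) * (p - 1) - 1) / ω δ ^ ((n:ℝ) - p))) < ⊤ :=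
  lemma2_integral_equivalence_general n hn p hp1 hp2 ω ψ hmono hωpos hψ₂
end

section
/- Let $\omega$ be a nondecreasing continuous function on $[0,\infty)$ with $\omega(0)=0$, positive for $\delta>0$, let $\chi(\delta) = \delta\omega(\delta)$ with inverse $\chi^{-1}$, and let $1 < p < 2$. Define $\Theta_p(y) = (\int_1^y (\chi^{-1}(1/\tau))^p d\tau)^{1/p}$ for $y > 1$. If $\int_0^1 \delta^{2p-3}/(\omega(\delta))^{2-p} d\delta < \infty$, then $\int_1^\infty \lambda^{-p} (\Theta_p(\lambda))^p d\lambda < \infty$. -/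
open MeasureTheory Real Set ENNReal

/-!
Writing `f τ = ψ (1/τ) ^ p`, we have `Θ λ ^ p = ∫_1^λ f`, so Tonelli on the triangle `1 < τ ≤ λ`
turns the integral into `(p - 1)⁻¹ ∫_1^∞ τ^(1-p) f τ dτ`. The layer-cake formula for the measure
`μ = τ^(1-p) dτ` on `(1, ∞)` rewrites this as `p/(p-1) ∫_0^∞ t^(p-1) μ {τ | t < ψ (1/τ)} dt`.
As `t < ψ (1/τ)` forces `τ < 1/χ t`, the superlevel set has `μ`-measure at most
`χ t ^ (p-2) / (2 - p)`, and none at all once `t ≥ ψ 1`. Finally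
`t^(p-1) χ t ^ (p-2) = t^(2p-3) / ω t ^ (2-p)` is integrable on `(0, 1]` by hypothesis and
bounded on `[1, ψ 1]`.
-/

lemma lintegral_Ioi_rpow_of_lt {r c : ℝ} (hr : r < -1) (hc : 0 < c) :
    ∫⁻ x in Ioi c, ENNReal.ofReal (x ^ r) = ENNReal.ofReal (-c ^ (r + 1) / (r + 1)) := by
  rw [← ofReal_integral_eq_lintegral_ofReal (integrableOn_Ioi_rpow_of_lt hr hc)
    (ae_restrict_of_forall_mem measurableSet_Ioi fun x hx => rpow_nonneg (hc.trans hx).le _),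
    integral_Ioi_rpow_of_lt hr hc]

lemma lintegral_Ioc_rpow_of_neg_one_lt {r A : ℝ} (hr : -1 < r) (hA : 0 ≤ A) :
    ∫⁻ x in Ioc 0 A, ENNReal.ofReal (x ^ r) = ENNReal.ofReal (A ^ (r + 1) / (r + 1)) := by
  have hint : IntegrableOn (fun x : ℝ => x ^ r) (Ioc 0 A) :=
    (intervalIntegrable_iff_integrableOn_Ioc_of_le hA).1
      (intervalIntegral.intervalIntegrable_rpow' hr)
  rw [← ofReal_integral_eq_lintegral_ofReal hint
    (ae_restrict_of_forall_mem measurableSet_Ioc fun x hx => rpow_nonneg hx.1.le _),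
    ← intervalIntegral.integral_of_le hA, integral_rpow (Or.inl hr), zero_rpow (by linarith),
    sub_zero]

lemma lintegral_Ioi_lintegral_Ioc_mul_rpow {g : ℝ → ℝ≥0∞} (hg : Measurable g) {a p : ℝ}
    (ha : 0 < a) (hp : 1 < p) :
    ∫⁻ l in Ioi a, (∫⁻ τ in Ioc a l, g τ) * ENNReal.ofReal (l ^ (-p))
      = ENNReal.ofReal (p - 1)⁻¹ * ∫⁻ τ in Ioi a, ENNReal.ofReal (τ ^ (1 - p)) * g τ := by
  set w : ℝ → ℝ≥0∞ := fun l => ENNReal.ofReal (l ^ (-p))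
  have hw : Measurable w := by fun_prop
  have htail : ∀ τ ∈ Ioi a,
      ∫⁻ l in Ici τ, w l = ENNReal.ofReal (p - 1)⁻¹ * ENNReal.ofReal (τ ^ (1 - p)) := by
    intro τ hτ
    rw [setLIntegral_congr Ioi_ae_eq_Ici.symm, lintegral_Ioi_rpow_of_lt (by linarith) (ha.trans hτ),
      ← ofReal_mul (inv_nonneg.2 (by linarith)), show -p + 1 = 1 - p by ring, neg_div, ← div_neg,
      neg_sub, div_eq_inv_mul]
  let k : ℝ → ℝ → ℝ≥0∞ := fun l τ => (Iic l).indicator g τ * w l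
  have hk : Measurable (Function.uncurry k) := by
    have : Function.uncurry k = fun q : ℝ × ℝ =>
        {q : ℝ × ℝ | q.2 ≤ q.1}.indicator (fun q => g q.2) q * w q.1 := by
      ext ⟨l, τ⟩
      simp [k, indicator_apply]
    rw [this]
    exact ((hg.comp measurable_snd).indicator (measurableSet_le measurable_snd measurable_fst)).mul
      (hw.comp measurable_fst)
  calc ∫⁻ l in Ioi a, (∫⁻ τ in Ioc a l, g τ) * w l
      = ∫⁻ l in Ioi a, ∫⁻ τ in Ioi a, k l τ := by
        refine lintegral_congr fun l => ?_
        rw [lintegral_mul_const' _ _ ofReal_ne_top, setLIntegral_indicator measurableSet_Iic,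
          inter_comm, Ioi_inter_Iic]
    _ = ∫⁻ τ in Ioi a, ∫⁻ l in Ioi a, k l τ := lintegral_lintegral_swap hk.aemeasurable
    _ = ∫⁻ τ in Ioi a, ENNReal.ofReal (p - 1)⁻¹ * (ENNReal.ofReal (τ ^ (1 - p)) * g τ) := by
        refine setLIntegral_congr_fun measurableSet_Ioi fun τ (hτ : a < τ) => ?_
        have hkτ : ∀ l, k l τ = (Ici τ).indicator w l * g τ := by
          intro l
          by_cases h : τ ≤ l <;> simp [k, indicator_apply, h, mul_comm]
        simp_rw [hkτ]
        rw [lintegral_mul_const _ (hw.indicator measurableSet_Ici),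
          setLIntegral_indicator measurableSet_Ici, inter_eq_left.2 (Ici_subset_Ioi.2 hτ),
          htail τ hτ, mul_assoc]
    _ = _ := lintegral_const_mul' _ _ ofReal_ne_top

lemma rpow_sub_one_mul_mul_rpow_sub_two {p t w : ℝ} (ht : 0 < t) (hw : 0 < w) :
    t ^ (p - 1) * (t * w) ^ (p - 2) = t ^ (2 * p - 3) / w ^ (2 - p) := by
  rw [mul_rpow ht.le hw.le, ← mul_assoc, ← rpow_add ht, div_eq_mul_inv, ← rpow_neg hw.le]
  ring_nf

lemma ofReal_integral_rpow_inv_rpow_div_rpow {g : ℝ → ℝ} (hg : Antitone g) (hg0 : ∀ τ, 0 ≤ g τ)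
    {p l : ℝ} (hp : 0 < p) (hl : 1 ≤ l) :
    ENNReal.ofReal (((∫ τ in (1 : ℝ)..l, g τ) ^ (1 / p)) ^ p / l ^ p)
      = (∫⁻ τ in Ioc 1 l, ENNReal.ofReal (g τ)) * ENNReal.ofReal (l ^ (-p)) := by
  have hint_nonneg : 0 ≤ ∫ τ in (1 : ℝ)..l, g τ :=
    intervalIntegral.integral_nonneg hl fun τ _ => hg0 τ
  rw [← Real.rpow_mul hint_nonneg, one_div_mul_cancel hp.ne', Real.rpow_one, div_eq_mul_inv,
    ← Real.rpow_neg (by linarith), ofReal_mul hint_nonneg, intervalIntegral.integral_of_le hl,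
    ofReal_integral_eq_lintegral_ofReal hg.intervalIntegrable.1 (ae_of_all _ hg0)]

section InverseOfChi

variable {ω ψ : ℝ → ℝ} {p : ℝ}

lemma chi_lt_of_lt_inverse (hmono : MonotoneOn ω (Ici 0)) (hωpos : ∀ δ, 0 < δ → 0 < ω δ)
    (hψ : ∀ y, 0 ≤ y → 0 ≤ ψ y ∧ ψ y * ω (ψ y) = y) {δ y : ℝ} (hδ : 0 ≤ δ) (hy : 0 ≤ y)
    (h : δ < ψ y) : δ * ω δ < y := by
  obtain ⟨hψy, hχψy⟩ := hψ y hy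
  calc δ * ω δ ≤ δ * ω (ψ y) := mul_le_mul_of_nonneg_left (hmono hδ hψy h.le) hδ
    _ < ψ y * ω (ψ y) := mul_lt_mul_of_pos_right h (hωpos _ (hδ.trans_lt h))
    _ = y := hχψy

lemma monotoneOn_inverse (hmono : MonotoneOn ω (Ici 0)) (hωpos : ∀ δ, 0 < δ → 0 < ω δ)
    (hψ : ∀ y, 0 ≤ y → 0 ≤ ψ y ∧ ψ y * ω (ψ y) = y) : MonotoneOn ψ (Ici 0) := by
  intro a (ha : 0 ≤ a) b (hb : 0 ≤ b) hab
  by_contra! h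
  have := chi_lt_of_lt_inverse hmono hωpos hψ (hψ b hb).1 ha h
  rw [(hψ b hb).2] at this
  linarith

-- Frozen at its value for `τ = 1`, `τ ↦ ψ (1/τ)` is antitone on all of `ℝ`, hence measurable.
lemma antitone_inverse_inv_max_one (hψmono : MonotoneOn ψ (Ici 0)) :
    Antitone fun τ => ψ (max τ 1)⁻¹ := fun a b hab =>
  hψmono (show (0 : ℝ) ≤ (max b 1)⁻¹ by positivity) (show (0 : ℝ) ≤ (max a 1)⁻¹ by positivity)
    (inv_anti₀ (by positivity) (max_le_max hab le_rfl))

lemma setLIntegral_superlevel_inverse_le (hp2 : p < 2) (hmono : MonotoneOn ω (Ici 0))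
    (hωpos : ∀ δ, 0 < δ → 0 < ω δ) (hψ : ∀ y, 0 ≤ y → 0 ≤ ψ y ∧ ψ y * ω (ψ y) = y)
    {t : ℝ} (ht : 0 < t) :
    ∫⁻ τ in {τ | t < ψ (max τ 1)⁻¹} ∩ Ioi 1, ENNReal.ofReal (τ ^ (1 - p))
      ≤ (Iio (ψ 1)).indicator (fun t => ENNReal.ofReal ((t * ω t) ^ (p - 2) / (2 - p))) t := by
  have hχ : 0 < t * ω t := mul_pos ht (hωpos t ht)
  by_cases ht1 : t < ψ 1
  · rw [indicator_of_mem (mem_Iio.2 ht1)]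
    have hsub : {τ | t < ψ (max τ 1)⁻¹} ∩ Ioi 1 ⊆ Ioc 0 (t * ω t)⁻¹ := by
      rintro τ ⟨hτt : t < ψ (max τ 1)⁻¹, hτ : 1 < τ⟩
      rw [max_eq_left hτ.le] at hτt
      have := chi_lt_of_lt_inverse hmono hωpos hψ ht.le (by positivity) hτt
      exact ⟨by linarith, ((lt_inv_comm₀ hχ (by linarith)).1 this).le⟩
    refine (lintegral_mono_set hsub).trans (le_of_eq ?_)
    rw [lintegral_Ioc_rpow_of_neg_one_lt (by linarith) (inv_nonneg.2 hχ.le),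
      show 1 - p + 1 = 2 - p by ring, inv_rpow hχ.le, ← rpow_neg hχ.le, neg_sub]
  · have hempty : {τ | t < ψ (max τ 1)⁻¹} ∩ Ioi 1 = ∅ := by
      refine eq_empty_of_forall_notMem fun τ ⟨hτt, (hτ : 1 < τ)⟩ => ?_
      have : ψ (max τ 1)⁻¹ ≤ ψ 1 := by
        simpa using antitone_inverse_inv_max_one (monotoneOn_inverse hmono hωpos hψ)
          (le_max_right τ 1)
      exact ht1 ((show t < ψ (max τ 1)⁻¹ from hτt).trans_le this)
    simp [hempty]

lemma lintegral_rpow_mul_inverse_rpow_le (hp1 : 1 < p) (hp2 : p < 2)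
    (hmono : MonotoneOn ω (Ici 0)) (hωpos : ∀ δ, 0 < δ → 0 < ω δ)
    (hψ : ∀ y, 0 ≤ y → 0 ≤ ψ y ∧ ψ y * ω (ψ y) = y) :
    ∫⁻ τ in Ioi 1, ENNReal.ofReal (τ ^ (1 - p)) * ENNReal.ofReal (ψ (max τ 1)⁻¹ ^ p)
      ≤ ENNReal.ofReal (p / (2 - p)) *
        ∫⁻ t in Ioo 0 (ψ 1), ENNReal.ofReal (t ^ (p - 1) * (t * ω t) ^ (p - 2)) := by
  set F : ℝ → ℝ := fun τ => ψ (max τ 1)⁻¹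
  have hF : Measurable F :=
    (antitone_inverse_inv_max_one (monotoneOn_inverse hmono hωpos hψ)).measurable
  have hF_nonneg : ∀ τ, 0 ≤ F τ := fun τ => (hψ _ (by positivity)).1
  set μ := (volume.restrict (Ioi (1 : ℝ))).withDensity fun τ => ENNReal.ofReal (τ ^ (1 - p))
  have hsuperlevel : ∀ t ∈ Ioi (0 : ℝ), μ {τ | t < F τ}
      ≤ (Iio (ψ 1)).indicator (fun t => ENNReal.ofReal ((t * ω t) ^ (p - 2) / (2 - p))) t := by
    intro t ht
    rw [withDensity_apply _ (measurableSet_lt measurable_const hF),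
      Measure.restrict_restrict (measurableSet_lt measurable_const hF)]
    exact setLIntegral_superlevel_inverse_le hp2 hmono hωpos hψ ht
  calc ∫⁻ τ in Ioi 1, ENNReal.ofReal (τ ^ (1 - p)) * ENNReal.ofReal (F τ ^ p)
      = ∫⁻ τ, ENNReal.ofReal (F τ ^ p) ∂μ :=
        (lintegral_withDensity_eq_lintegral_mul _ (by fun_prop) (by fun_prop)).symm
    _ = ENNReal.ofReal p * ∫⁻ t in Ioi 0, μ {τ | t < F τ} * ENNReal.ofReal (t ^ (p - 1)) :=
        lintegral_rpow_eq_lintegral_meas_lt_mul μ (ae_of_all _ hF_nonneg) hF.aemeasurable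
          (by linarith)
    _ ≤ ENNReal.ofReal p * ∫⁻ t in Ioi 0, (Iio (ψ 1)).indicator (fun t =>
          ENNReal.ofReal ((t * ω t) ^ (p - 2) / (2 - p)) * ENNReal.ofReal (t ^ (p - 1))) t := by
        refine mul_le_mul_right (setLIntegral_mono' measurableSet_Ioi fun t ht => ?_) _
        rw [indicator_mul_left]
        exact mul_le_mul_left (hsuperlevel t ht) _
    _ = ENNReal.ofReal (p / (2 - p)) *
          ∫⁻ t in Ioo 0 (ψ 1), ENNReal.ofReal (t ^ (p - 1) * (t * ω t) ^ (p - 2)) := by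
        rw [setLIntegral_indicator measurableSet_Iio, inter_comm, Ioi_inter_Iio, div_eq_mul_inv,
          ofReal_mul (by linarith), mul_assoc]
        congr 1
        rw [← lintegral_const_mul' _ _ ofReal_ne_top]
        refine setLIntegral_congr_fun measurableSet_Ioo fun t ht => ?_
        have hχ : 0 ≤ (t * ω t) ^ (p - 2) := rpow_nonneg (mul_pos ht.1 (hωpos t ht.1)).le _
        rw [← ofReal_mul (div_nonneg hχ (by linarith)), ← ofReal_mul (inv_nonneg.2 (by linarith))]
        congr 1
        ring

lemma lintegral_Ioo_rpow_mul_rpow_lt_top (hp1 : 1 ≤ p) (hp2 : p ≤ 2)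
    (hmono : MonotoneOn ω (Ici 0)) (hωpos : ∀ δ, 0 < δ → 0 < ω δ)
    (hint : ∫⁻ δ in Ioc 0 1, ENNReal.ofReal (δ ^ (2 * p - 3) / ω δ ^ (2 - p)) < ⊤) (R : ℝ) :
    ∫⁻ t in Ioo 0 R, ENNReal.ofReal (t ^ (p - 1) * (t * ω t) ^ (p - 2)) < ⊤ := by
  have hsub : Ioo 0 R ⊆ Ioc 0 1 ∪ Icc 1 R := fun t ⟨ht0, htR⟩ => by
    rcases le_total t 1 with ht1 | ht1
    exacts [Or.inl ⟨ht0, ht1⟩, Or.inr ⟨ht1, htR.le⟩]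
  refine (lintegral_mono_set hsub).trans_lt
    ((lintegral_union_le _ _ _).trans_lt (add_lt_top.2 ⟨?_, ?_⟩))
  · rwa [setLIntegral_congr_fun measurableSet_Ioc fun t ht =>
      by rw [rpow_sub_one_mul_mul_rpow_sub_two ht.1 (hωpos t ht.1)]]
  · refine setLIntegral_lt_top_of_le_nnreal measure_Icc_lt_top.ne
      ⟨(R ^ (p - 1) * ω 1 ^ (p - 2)).toNNReal, fun t ⟨ht1, htR⟩ => ofReal_le_ofReal ?_⟩
    have hω1 : 0 < ω 1 := hωpos 1 one_pos
    have hωt : ω 1 ≤ ω t :=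
      hmono (show (0 : ℝ) ≤ 1 by norm_num) (show (0 : ℝ) ≤ t by linarith) ht1
    have hχ : ω 1 ≤ t * ω t := by nlinarith
    exact mul_le_mul (rpow_le_rpow (by linarith) htR (by linarith))
      (rpow_le_rpow_of_nonpos hω1 hχ (by linarith)) (rpow_nonneg (by linarith) _)
      (rpow_nonneg (by linarith) _)

end InverseOfChi

theorem theta_integral_finite_general (p : ℝ) (hp1 : 1 < p) (hp2 : p < 2)
    (ω ψ : ℝ → ℝ) (hmono : MonotoneOn ω (Set.Ici 0))
    (hωpos : ∀ δ : ℝ, 0 < δ → 0 < ω δ)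
    (hψ₂ : ∀ y : ℝ, 0 ≤ y → 0 ≤ ψ y ∧ ψ y * ω (ψ y) = y)
    (Θ : ℝ → ℝ) (hΘ : ∀ y : ℝ, Θ y = (∫ τ in (1:ℝ)..y, ψ (1/τ) ^ p) ^ (1/p))
    (hint : (∫⁻ δ in Set.Ioc (0:ℝ) 1,
      ENNReal.ofReal (δ ^ (2 * p - 3) / ω δ ^ (2 - p))) < ⊤) :
    (∫⁻ l in Set.Ici (1:ℝ), ENNReal.ofReal (Θ l ^ p / l ^ p)) < ⊤ := by
  set g : ℝ → ℝ := fun τ => ψ (max τ 1)⁻¹ ^ p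
  have hg_nonneg : ∀ τ, 0 ≤ g τ := fun τ => rpow_nonneg (hψ₂ _ (by positivity)).1 _
  have hg_anti : Antitone g := fun a b hab =>
    rpow_le_rpow (hψ₂ _ (by positivity)).1
      (antitone_inverse_inv_max_one (monotoneOn_inverse hmono hωpos hψ₂) hab) (by linarith)
  have hΘg : ∀ l ∈ Ioi (1 : ℝ), ENNReal.ofReal (Θ l ^ p / l ^ p)
      = (∫⁻ τ in Ioc 1 l, ENNReal.ofReal (g τ)) * ENNReal.ofReal (l ^ (-p)) := by
    intro l (hl : 1 < l)
    have hψg : ∫ τ in (1 : ℝ)..l, ψ (1 / τ) ^ p = ∫ τ in (1 : ℝ)..l, g τ :=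
      intervalIntegral.integral_congr fun τ hτ => by
        rw [uIcc_of_le hl.le] at hτ
        simp [g, max_eq_left hτ.1]
    rw [hΘ, hψg]
    exact ofReal_integral_rpow_inv_rpow_div_rpow hg_anti hg_nonneg (by linarith) hl.le
  calc ∫⁻ l in Ici 1, ENNReal.ofReal (Θ l ^ p / l ^ p)
      = ∫⁻ l in Ioi 1, ENNReal.ofReal (Θ l ^ p / l ^ p) := setLIntegral_congr Ioi_ae_eq_Ici.symm
    _ = ∫⁻ l in Ioi 1, (∫⁻ τ in Ioc 1 l, ENNReal.ofReal (g τ)) * ENNReal.ofReal (l ^ (-p)) :=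
        setLIntegral_congr_fun measurableSet_Ioi hΘg
    _ = ENNReal.ofReal (p - 1)⁻¹ *
          ∫⁻ τ in Ioi 1, ENNReal.ofReal (τ ^ (1 - p)) * ENNReal.ofReal (g τ) :=
        lintegral_Ioi_lintegral_Ioc_mul_rpow hg_anti.measurable.ennreal_ofReal one_pos hp1
    _ ≤ ENNReal.ofReal (p - 1)⁻¹ * (ENNReal.ofReal (p / (2 - p)) *
          ∫⁻ t in Ioo 0 (ψ 1), ENNReal.ofReal (t ^ (p - 1) * (t * ω t) ^ (p - 2))) :=
        mul_le_mul_right (lintegral_rpow_mul_inverse_rpow_le hp1 hp2 hmono hωpos hψ₂) _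
    _ < ⊤ := mul_lt_top ofReal_lt_top (mul_lt_top ofReal_lt_top
        (lintegral_Ioo_rpow_mul_rpow_lt_top hp1.le hp2.le hmono hωpos hint _))

/-- if `∫_0^1 δ^{2p-3}/ω(δ)^{2-p} dδ < ∞` then
`∫_1^∞ λ^{-p} Θ_p(λ)^p dλ < ∞`, where `Θ_p(y) = (∫_1^y (χ⁻¹(1/τ))^p dτ)^{1/p}`
and `ψ = χ⁻¹` is the inverse of `χ(δ) = δω(δ)`. -/
theorem theta_integral_finite (p : ℝ) (hp1 : 1 < p) (hp2 : p < 2)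
    (ω ψ : ℝ → ℝ) (hmono : MonotoneOn ω (Set.Ici 0)) (hcont : ContinuousOn ω (Set.Ici 0))
    (hω0 : ω 0 = 0) (hωpos : ∀ δ : ℝ, 0 < δ → 0 < ω δ)
    (hψ₁ : ∀ δ : ℝ, 0 ≤ δ → ψ (δ * ω δ) = δ)
    (hψ₂ : ∀ y : ℝ, 0 ≤ y → 0 ≤ ψ y ∧ ψ y * ω (ψ y) = y)
    (Θ : ℝ → ℝ) (hΘ : ∀ y : ℝ, Θ y = (∫ τ in (1:ℝ)..y, ψ (1/τ) ^ p) ^ (1/p))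
    (hint : (∫⁻ δ in Set.Ioc (0:ℝ) 1,
      ENNReal.ofReal (δ ^ (2 * p - 3) / ω δ ^ (2 - p))) < ⊤) :
    (∫⁻ l in Set.Ici (1:ℝ), ENNReal.ofReal (Θ l ^ p / l ^ p)) < ⊤ :=
  theta_integral_finite_general p hp1 hp2 ω ψ hmono hωpos hψ₂ Θ hΘ hint
end

section
/- Let $\omega$ be a nondecreasing continuous function on $(0,\infty)$ with $\lim_{\delta\to 0^+}\omega(\delta)/\delta^\varepsilon = \infty$ for every $\varepsilon > 0$. Define $\omega^*(\delta) = \delta/(1+\delta) + \delta \inf_{0 < x \leq \delta} \omega(x)/x$. Then $\omega^*$ is a nondecreasing continuous function on $(0,\infty)$ extending continuously to $\omega^*(0)=0$, satisfies $\omega^*(2\delta) < 2\omega^*(\delta)$ for all $\delta > 0$, satisfies $\omega^*(\delta) = O(\omega(\delta))$ as $\delta \to 0^+$, and $\lim_{\delta\to 0^+}\omega^*(\delta)/\delta^\varepsilon = \infty$ for every $\varepsilon > 0$. -/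
/-!
Write `ω*(δ) = δ / (1 + δ) + g δ` with `g δ = δ · I δ` and `I δ = inf_{0 < x ≤ δ} ω x / x`.
The infimum `I` is nonincreasing, while `g` is nondecreasing: for `a ≤ b` and `a < x ≤ b`,
monotonicity of `ω` gives `ω x / x ≥ ω a / b ≥ g a / b`. Squeezed between these two
monotonicities, `|g b - g a| ≤ |(b - a) · I a|`, so `g` is continuous. Doubling follows from
`I (2δ) ≤ I δ` and the strict subadditivity of `δ / (1 + δ)`. The bound `ω* δ ≤ δ + ω δ`
gives `ω* → 0`, and `ω* ≤ 2ω` once `δ ≤ ω δ`, which holds near `0` by slow decay with exponent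
`1`. Finally, if `ω x ≥ K x^ε` on `(0, δ]` with `ε ≤ 1`, then `I δ ≥ K δ^(ε-1)`, i.e.
`g δ ≥ K δ^ε`; exponents `ε > 1` reduce to `1` since `δ^ε ≤ δ` on `(0, 1]`.
-/

open Real Set Filter Topology

noncomputable def infSlope (ω : ℝ → ℝ) (δ : ℝ) : ℝ := sInf ((fun x => ω x / x) '' Ioc 0 δ)

noncomputable def regularizedModulus (ω : ℝ → ℝ) (δ : ℝ) : ℝ := δ / (1 + δ) + δ * infSlope ω δ

variable {ω : ℝ → ℝ}

section InfSlope

lemma zero_mem_lowerBounds_slope_image (hnn : ∀ x, 0 < x → 0 ≤ ω x) (δ : ℝ) :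
    0 ∈ lowerBounds ((fun x => ω x / x) '' Ioc 0 δ) := by
  rintro _ ⟨x, hx, rfl⟩
  exact div_nonneg (hnn x hx.1) hx.1.le

lemma bddBelow_slope_image (hnn : ∀ x, 0 < x → 0 ≤ ω x) (δ : ℝ) :
    BddBelow ((fun x => ω x / x) '' Ioc 0 δ) :=
  ⟨0, zero_mem_lowerBounds_slope_image hnn δ⟩

lemma infSlope_nonneg (hnn : ∀ x, 0 < x → 0 ≤ ω x) (δ : ℝ) : 0 ≤ infSlope ω δ :=
  Real.sInf_nonneg (zero_mem_lowerBounds_slope_image hnn δ)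

lemma infSlope_le_div (hnn : ∀ x, 0 < x → 0 ≤ ω x) {x δ : ℝ} (hx : x ∈ Ioc 0 δ) :
    infSlope ω δ ≤ ω x / x :=
  csInf_le (bddBelow_slope_image hnn δ) (mem_image_of_mem _ hx)

lemma le_infSlope {c δ : ℝ} (hδ : 0 < δ) (h : ∀ x ∈ Ioc 0 δ, c ≤ ω x / x) : c ≤ infSlope ω δ :=
  le_csInf ⟨_, mem_image_of_mem _ ⟨hδ, le_rfl⟩⟩ (forall_mem_image.2 h)

lemma mul_infSlope_le (hnn : ∀ x, 0 < x → 0 ≤ ω x) {δ : ℝ} (hδ : 0 < δ) :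
    δ * infSlope ω δ ≤ ω δ := by
  have h := infSlope_le_div hnn ⟨hδ, le_rfl⟩
  rwa [le_div_iff₀ hδ, mul_comm] at h

lemma infSlope_antitoneOn (hnn : ∀ x, 0 < x → 0 ≤ ω x) : AntitoneOn (infSlope ω) (Ioi 0) :=
  fun _ ha b _ hab => csInf_le_csInf (bddBelow_slope_image hnn b)
    ⟨_, mem_image_of_mem _ ⟨ha, le_rfl⟩⟩ (image_mono (Ioc_subset_Ioc_right hab))

lemma monotoneOn_mul_infSlope (hmono : MonotoneOn ω (Ioi 0)) (hnn : ∀ x, 0 < x → 0 ≤ ω x) :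
    MonotoneOn (fun δ => δ * infSlope ω δ) (Ioi 0) := by
  intro a (ha : 0 < a) b (hb : 0 < b) hab
  suffices a * infSlope ω a / b ≤ infSlope ω b from (div_le_iff₀' hb).1 this
  have hIa := infSlope_nonneg hnn a
  refine le_infSlope hb fun x hx => ?_
  rcases le_or_gt x a with hxa | hax
  · calc a * infSlope ω a / b ≤ infSlope ω a :=
          div_le_of_le_mul₀ hb.le hIa (by rw [mul_comm]; gcongr)
      _ ≤ ω x / x := infSlope_le_div hnn ⟨hx.1, hxa⟩
  · calc a * infSlope ω a / b ≤ ω a / b := by gcongr; exact mul_infSlope_le hnn ha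
      _ ≤ ω x / x := div_le_div₀ (hnn x hx.1) (hmono ha (ha.trans hax) hax.le) hx.1 hx.2

lemma rpow_mul_le_mul_infSlope {K ε δ : ℝ} (hK : 0 ≤ K) (hε : ε ≤ 1) (hδ : 0 < δ)
    (h : ∀ x ∈ Ioc 0 δ, K * x ^ ε ≤ ω x) : K * δ ^ ε ≤ δ * infSlope ω δ := by
  have hI : K * δ ^ (ε - 1) ≤ infSlope ω δ := le_infSlope hδ fun x hx => by
    calc K * δ ^ (ε - 1) ≤ K * x ^ (ε - 1) :=
          mul_le_mul_of_nonneg_left (rpow_le_rpow_of_nonpos hx.1 hx.2 (by linarith)) hK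
      _ = K * x ^ ε / x := by rw [rpow_sub_one hx.1.ne', mul_div_assoc]
      _ ≤ ω x / x := div_le_div_of_nonneg_right (h x hx) hx.1.le
  calc K * δ ^ ε = δ * (K * δ ^ (ε - 1)) := by
        rw [rpow_sub_one hδ.ne']; field_simp
    _ ≤ δ * infSlope ω δ := by gcongr

lemma tendsto_mul_infSlope_div_rpow {ε : ℝ} (hε : ε ≤ 1)
    (h : Tendsto (fun δ => ω δ / δ ^ ε) (𝓝[>] 0) atTop) :
    Tendsto (fun δ => δ * infSlope ω δ / δ ^ ε) (𝓝[>] 0) atTop := by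
  refine tendsto_atTop.2 fun K => ?_
  obtain ⟨η, hη, hsub⟩ := mem_nhdsGT_iff_exists_Ioc_subset.1 (h.eventually_ge_atTop (max K 0))
  filter_upwards [Ioc_mem_nhdsGT hη] with δ hδ
  have hbound := rpow_mul_le_mul_infSlope (le_max_right K 0) hε hδ.1 fun x hx =>
    (le_div_iff₀ (rpow_pos_of_pos hx.1 ε)).1 (hsub ⟨hx.1, hx.2.trans hδ.2⟩)
  rw [le_div_iff₀ (rpow_pos_of_pos hδ.1 ε)]
  exact (mul_le_mul_of_nonneg_right (le_max_left K 0) (rpow_nonneg hδ.1.le ε)).trans hbound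

end InfSlope

lemma abs_mul_sub_mul_le_of_antitoneOn {I : ℝ → ℝ} (hI : AntitoneOn I (Ioi 0))
    (hg : MonotoneOn (fun δ => δ * I δ) (Ioi 0)) {a b : ℝ} (ha : 0 < a) (hb : 0 < b) :
    |b * I b - a * I a| ≤ |(b - a) * I a| := by
  rcases le_total a b with hab | hba
  · have h₁ : a * I a ≤ b * I b := hg ha hb hab
    have h₂ : b * I b ≤ b * I a := mul_le_mul_of_nonneg_left (hI ha hb hab) hb.le
    rw [abs_of_nonneg (by linarith)]
    exact le_trans (by linarith) (le_abs_self _)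
  · have h₁ : b * I b ≤ a * I a := hg hb ha hba
    have h₂ : b * I a ≤ b * I b := mul_le_mul_of_nonneg_left (hI hb ha hba) hb.le
    rw [abs_of_nonpos (by linarith)]
    exact le_trans (by linarith) (neg_le_abs _)

lemma continuousOn_mul_of_antitoneOn {I : ℝ → ℝ} (hI : AntitoneOn I (Ioi 0))
    (hg : MonotoneOn (fun δ => δ * I δ) (Ioi 0)) :
    ContinuousOn (fun δ => δ * I δ) (Ioi 0) := by
  intro a (ha : 0 < a)
  rw [ContinuousWithinAt, tendsto_iff_norm_sub_tendsto_zero]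
  have hbound : Tendsto (fun δ => |(δ - a) * I a|) (𝓝[Ioi 0] a) (𝓝 0) := by
    have hc : Continuous fun δ => |(δ - a) * I a| := by fun_prop
    simpa using (hc.tendsto a).mono_left nhdsWithin_le_nhds
  exact squeeze_zero' (Eventually.of_forall fun _ => norm_nonneg _)
    (eventually_mem_nhdsWithin.mono fun δ hδ => abs_mul_sub_mul_le_of_antitoneOn hI hg ha hδ)
    hbound

section RegularizedModulus

lemma regularizedModulus_nonneg (hnn : ∀ x, 0 < x → 0 ≤ ω x) {δ : ℝ} (hδ : 0 ≤ δ) :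
    0 ≤ regularizedModulus ω δ :=
  add_nonneg (by positivity) (mul_nonneg hδ (infSlope_nonneg hnn δ))

lemma regularizedModulus_le (hnn : ∀ x, 0 < x → 0 ≤ ω x) {δ : ℝ} (hδ : 0 < δ) :
    regularizedModulus ω δ ≤ δ + ω δ :=
  add_le_add (div_le_self hδ.le (by linarith)) (mul_infSlope_le hnn hδ)

lemma monotoneOn_regularizedModulus (hmono : MonotoneOn ω (Ioi 0))
    (hnn : ∀ x, 0 < x → 0 ≤ ω x) : MonotoneOn (regularizedModulus ω) (Ioi 0) := by
  have hfrac : MonotoneOn (fun δ : ℝ => δ / (1 + δ)) (Ioi 0) := by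
    intro a (ha : 0 < a) b (hb : 0 < b) hab
    rw [div_le_div_iff₀ (by positivity) (by positivity)]
    linarith
  exact hfrac.add (monotoneOn_mul_infSlope hmono hnn)

lemma continuousOn_regularizedModulus (hmono : MonotoneOn ω (Ioi 0))
    (hnn : ∀ x, 0 < x → 0 ≤ ω x) : ContinuousOn (regularizedModulus ω) (Ioi 0) := by
  have hfrac : ContinuousOn (fun δ : ℝ => δ / (1 + δ)) (Ioi 0) :=
    continuousOn_id.div (continuousOn_const.add continuousOn_id)
      fun δ (hδ : 0 < δ) => by positivity
  exact hfrac.add <|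
    continuousOn_mul_of_antitoneOn (infSlope_antitoneOn hnn) (monotoneOn_mul_infSlope hmono hnn)

lemma tendsto_regularizedModulus_nhdsGT_zero (hnn : ∀ x, 0 < x → 0 ≤ ω x)
    (hω0 : Tendsto ω (𝓝[>] 0) (𝓝 0)) : Tendsto (regularizedModulus ω) (𝓝[>] 0) (𝓝 0) := by
  have hbound : Tendsto (fun δ => δ + ω δ) (𝓝[>] 0) (𝓝 0) := by
    simpa using (tendsto_nhdsWithin_of_tendsto_nhds tendsto_id).add hω0
  refine tendsto_of_tendsto_of_tendsto_of_le_of_le' tendsto_const_nhds hbound ?_ ?_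
  · filter_upwards [self_mem_nhdsWithin] with δ hδ using regularizedModulus_nonneg hnn hδ.out.le
  · filter_upwards [self_mem_nhdsWithin] with δ hδ using regularizedModulus_le hnn hδ

lemma regularizedModulus_two_mul_lt (hnn : ∀ x, 0 < x → 0 ≤ ω x) {δ : ℝ} (hδ : 0 < δ) :
    regularizedModulus ω (2 * δ) < 2 * regularizedModulus ω δ := by
  have hfrac : 2 * δ / (1 + 2 * δ) < 2 * (δ / (1 + δ)) := by
    rw [← mul_div_assoc]
    exact div_lt_div_of_pos_left (by positivity) (by positivity) (by linarith)
  have hI : infSlope ω (2 * δ) ≤ infSlope ω δ :=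
    infSlope_antitoneOn hnn hδ (show (0 : ℝ) < 2 * δ by positivity) (by linarith)
  unfold regularizedModulus
  nlinarith

lemma eventually_regularizedModulus_le_two_mul (hnn : ∀ x, 0 < x → 0 ≤ ω x)
    (h : ∀ᶠ δ in 𝓝[>] 0, δ ≤ ω δ) : ∀ᶠ δ in 𝓝[>] 0, regularizedModulus ω δ ≤ 2 * ω δ := by
  filter_upwards [h, self_mem_nhdsWithin] with δ hle hδ
  linarith [regularizedModulus_le hnn hδ]

lemma tendsto_regularizedModulus_div_rpow (hnn : ∀ x, 0 < x → 0 ≤ ω x) {ε ε' : ℝ}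
    (hε' : ε' ≤ ε) (hε'1 : ε' ≤ 1) (h : Tendsto (fun δ => ω δ / δ ^ ε') (𝓝[>] 0) atTop) :
    Tendsto (fun δ => regularizedModulus ω δ / δ ^ ε) (𝓝[>] 0) atTop := by
  refine tendsto_atTop_mono' _ ?_ (tendsto_mul_infSlope_div_rpow hε'1 h)
  filter_upwards [Ioc_mem_nhdsGT one_pos] with δ hδ
  have hg := mul_nonneg hδ.1.le (infSlope_nonneg hnn δ)
  calc δ * infSlope ω δ / δ ^ ε' ≤ δ * infSlope ω δ / δ ^ ε :=
        div_le_div_of_nonneg_left hg (rpow_pos_of_pos hδ.1 ε)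
          (rpow_le_rpow_of_exponent_ge hδ.1 hδ.2 hε')
    _ ≤ regularizedModulus ω δ / δ ^ ε := by
        have hfrac : 0 ≤ δ / (1 + δ) := by have := hδ.1; positivity
        exact div_le_div_of_nonneg_right (le_add_of_nonneg_left hfrac) (rpow_nonneg hδ.1.le ε)

end RegularizedModulus

theorem regularized_modulus_general (ω : ℝ → ℝ) (hmono : MonotoneOn ω (Set.Ioi 0))
    (hωpos : ∀ δ : ℝ, 0 < δ → 0 < ω δ)
    (hω0 : Tendsto ω (nhdsWithin 0 (Set.Ioi 0)) (nhds 0))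
    (hslow : ∀ ε : ℝ, 0 < ε →
      Tendsto (fun δ => ω δ / δ ^ ε) (nhdsWithin 0 (Set.Ioi 0)) atTop)
    (ωs : ℝ → ℝ)
    (hωs : ∀ δ : ℝ, ωs δ = δ / (1 + δ) + δ * sInf ((fun x => ω x / x) '' Set.Ioc 0 δ)) :
    MonotoneOn ωs (Set.Ioi 0) ∧ ContinuousOn ωs (Set.Ioi 0) ∧
    Tendsto ωs (nhdsWithin 0 (Set.Ioi 0)) (nhds 0) ∧
    (∀ δ : ℝ, 0 < δ → ωs (2 * δ) < 2 * ωs δ) ∧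
    (∃ C : ℝ, 0 < C ∧ ∀ᶠ δ in nhdsWithin 0 (Set.Ioi 0), ωs δ ≤ C * ω δ) ∧
    (∀ ε : ℝ, 0 < ε →
      Tendsto (fun δ => ωs δ / δ ^ ε) (nhdsWithin 0 (Set.Ioi 0)) atTop) := by
  have hnn : ∀ x, 0 < x → 0 ≤ ω x := fun x hx => (hωpos x hx).le
  obtain rfl : ωs = regularizedModulus ω := funext hωs
  have hlin : ∀ᶠ δ in 𝓝[>] 0, δ ≤ ω δ := by
    filter_upwards [(hslow 1 one_pos).eventually_ge_atTop 1, self_mem_nhdsWithin] with δ h hδ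
    rwa [rpow_one, one_le_div hδ] at h
  exact ⟨monotoneOn_regularizedModulus hmono hnn, continuousOn_regularizedModulus hmono hnn,
    tendsto_regularizedModulus_nhdsGT_zero hnn hω0,
    fun δ hδ => regularizedModulus_two_mul_lt hnn hδ,
    ⟨2, two_pos, eventually_regularizedModulus_le_two_mul hnn hlin⟩,
    fun ε hε => tendsto_regularizedModulus_div_rpow hnn (min_le_left ε 1) (min_le_right ε 1)
      (hslow _ (lt_min hε one_pos))⟩

/-- regularization of a modulus of continuity that decreases to zero slower
than any power: `ω*(δ) = δ/(1+δ) + δ·inf_{0<x≤δ} ω(x)/x` is a nondecreasing continuous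
modulus with `ω*(2δ) < 2ω*(δ)`, `ω* = O(ω)` near `0`, still slower than any power. -/
theorem regularized_modulus (ω : ℝ → ℝ) (hmono : MonotoneOn ω (Set.Ioi 0))
    (hcont : ContinuousOn ω (Set.Ioi 0)) (hωpos : ∀ δ : ℝ, 0 < δ → 0 < ω δ)
    (hω0 : Tendsto ω (nhdsWithin 0 (Set.Ioi 0)) (nhds 0))
    (hslow : ∀ ε : ℝ, 0 < ε →
      Tendsto (fun δ => ω δ / δ ^ ε) (nhdsWithin 0 (Set.Ioi 0)) atTop)
    (ωs : ℝ → ℝ)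
    (hωs : ∀ δ : ℝ, ωs δ = δ / (1 + δ) + δ * sInf ((fun x => ω x / x) '' Set.Ioc 0 δ)) :
    MonotoneOn ωs (Set.Ioi 0) ∧ ContinuousOn ωs (Set.Ioi 0) ∧
    Tendsto ωs (nhdsWithin 0 (Set.Ioi 0)) (nhds 0) ∧
    (∀ δ : ℝ, 0 < δ → ωs (2 * δ) < 2 * ωs δ) ∧
    (∃ C : ℝ, 0 < C ∧ ∀ᶠ δ in nhdsWithin 0 (Set.Ioi 0), ωs δ ≤ C * ω δ) ∧
    (∀ ε : ℝ, 0 < ε →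
      Tendsto (fun δ => ωs δ / δ ^ ε) (nhdsWithin 0 (Set.Ioi 0)) atTop) :=
  regularized_modulus_general ω hmono hωpos hω0 hslow ωs hωs
end
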